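/- Assume conditions (12). Define the linear map S : ℝ² → ℝ² by S(x,y) = (((2k2·n2 − k2)·x + e2·y)/e2, x/e2) and the cubic vector field G2(x,y) = (y + k2·(2n2 − 1)·x² − (4k2²n2² + 2e2·k2·n2 − 4k2²n2 − e2·k2 + k2² − 1)·x·y − k2·(2n2 − 1)·(e2·k2·n2 + 1)·y² − n2·e2²·k2²·(2n2 − 1)·y³, −x − e2·x·y − e2·k2·n2·y² − e2²·k2·n2·y³). Then for all (x,y) ∈ ℝ², S(Z2(x+1, y+1)) = G2(S(x,y)); that is, after translating the equilibrium (1,1) to the origin, the linear change S conjugates the facilitation system Z2 to the normal form G2 (system (14) of the paper). -/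

import Mathlib

/-- The facilitation resource–consumer system `Z2`. -/
noncomputable def Z2 (k2 n2 e2 p2 s2 w2 h2 : ℝ) (p : ℝ × ℝ) : ℝ × ℝ :=
  (p.1 * (k2 * p.1 * (1 - n2 * p.1) - e2 * p.2 - w2),
   p.2 * (e2 * p2 * p.1 - s2 * p.2 - h2))

/-- The linear change `S(x,y) = (((2k2·n2 − k2)·x + e2·y)/e2, x/e2)`. -/
noncomputable def Smap2 (k2 n2 e2 : ℝ) (p : ℝ × ℝ) : ℝ × ℝ :=
  (((2 * k2 * n2 - k2) * p.1 + e2 * p.2) / e2, p.1 / e2)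

/-- The cubic normal form `G2` (system (14) of the paper). -/
noncomputable def G2 (k2 n2 e2 : ℝ) (p : ℝ × ℝ) : ℝ × ℝ :=
  (p.2 + k2 * (2 * n2 - 1) * p.1 ^ 2
      - (4 * k2 ^ 2 * n2 ^ 2 + 2 * e2 * k2 * n2 - 4 * k2 ^ 2 * n2
          - e2 * k2 + k2 ^ 2 - 1) * p.1 * p.2
      - k2 * (2 * n2 - 1) * (e2 * k2 * n2 + 1) * p.2 ^ 2
      - n2 * e2 ^ 2 * k2 ^ 2 * (2 * n2 - 1) * p.2 ^ 3,
   -p.1 - e2 * p.1 * p.2 - e2 * k2 * n2 * p.2 ^ 2 - e2 ^ 2 * k2 * n2 * p.2 ^ 3)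

/-- Under conditions (12), after translating `(1,1)` to the origin, the linear change `S`
conjugates the facilitation system `Z2` to the normal form `G2`. -/
theorem stmt12 (k2 n2 e2 p2 s2 w2 h2 : ℝ)
    (he : e2 ≠ 0)
    (hh : h2 = (4 * k2 ^ 2 * n2 ^ 2 + 2 * e2 * k2 * n2 - 4 * k2 ^ 2 * n2
        - e2 * k2 + k2 ^ 2 + 1) / e2)
    (hp : p2 = (4 * k2 ^ 2 * n2 ^ 2 - 4 * k2 ^ 2 * n2 + k2 ^ 2 + 1) / e2 ^ 2)
    (hs : s2 = -(2 * k2 * n2) + k2)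
    (hw : w2 = -(k2 * n2) - e2 + k2) :
    ∀ p : ℝ × ℝ,
      Smap2 k2 n2 e2 (Z2 k2 n2 e2 p2 s2 w2 h2 (p.1 + 1, p.2 + 1))
        = G2 k2 n2 e2 (Smap2 k2 n2 e2 p) := by
  subst hh hp hs hw
  rintro ⟨x, y⟩
  refine Prod.ext ?_ ?_ <;>
    · simp only [Smap2, Z2, G2]
      field_simp
      ring
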